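/- Let T > 0, γ > 2π/T, τ ≥ 1 an integer, θ > 1/2, μ > 0, and let (ω_n)_{n≥1} ⊂ ℂ, (r_n)_{n≥1} ⊂ ℝ, (C_n)_{n≥1} ⊂ ℂ, (R_n)_{n≥1} ⊂ ℝ satisfy: Re ω_n ≥ γn for all n, r_n ≤ −Im ω_n for all n, and |R_n| ≤ μ|C_n|/n^θ for all n. Assume Σ_{n≥1} |C_n|²(1 + e^{−2 Im ω_n T}) < ∞. Then, with S = μ·max{ Σ_{n≥1} n^{−2θ}, π²/6 }, one has 4·Σ_{n≥τ} Σ_{m≥1} |C_n|·|R_m|·(1 + e^{(r_m − Im ω_n)T})·|K(ω_n − i r_m)| ≤ (4πS/(Tγ²))·[ Σ_{n≥τ} |C_n|²(1 + e^{−2 Im ω_n T}) + Σ_{n≥1} |C_n|²(1 + e^{−2 Im ω_n T}) ]. -/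

import Mathlib

open Real

/-- `K(u) = Tπ/(π² − T²u²)`. -/
noncomputable def Kfun (T : ℝ) (u : ℂ) : ℂ :=
  ((T : ℂ) * (π : ℂ)) / ((π : ℂ) ^ 2 - (T : ℂ) ^ 2 * u ^ 2)

/-- `S = μ·max{Σ_{n≥1} n^{−2θ}, π²/6}`. -/
noncomputable def Sconst (μ θ : ℝ) : ℝ :=
  μ * max (∑' n : {n : ℕ // 1 ≤ n}, ((n : ℕ) : ℝ) ^ (-(2 * θ))) (π ^ 2 / 6)

/-- Cauchy–Schwarz for tsums of nonnegative reals. -/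
lemma tsum_mul_le_sqrt_mul_sqrt {ι : Type*} (f g : ι → ℝ) (hf : ∀ i, 0 ≤ f i)
    (hg : ∀ i, 0 ≤ g i) (hf2 : Summable fun i => f i ^ 2)
    (hg2 : Summable fun i => g i ^ 2) :
    ∑' i, f i * g i ≤ Real.sqrt (∑' i, f i ^ 2) * Real.sqrt (∑' i, g i ^ 2) := by
  have hsm : Summable fun i => f i * g i := by
    refine Summable.of_nonneg_of_le (fun i => mul_nonneg (hf i) (hg i)) (fun i => ?_)
      ((hf2.add hg2).div_const 2)
    nlinarith [sq_nonneg (f i - g i)]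
  refine Summable.tsum_le_of_sum_le hsm fun s => ?_
  have h1 : ∑ i ∈ s, f i * g i ≤ Real.sqrt (∑ i ∈ s, f i ^ 2) * Real.sqrt (∑ i ∈ s, g i ^ 2) := by
    have hcs := Finset.sum_mul_sq_le_sq_mul_sq s f g
    have h0 : (0:ℝ) ≤ ∑ i ∈ s, f i * g i :=
      Finset.sum_nonneg fun i _ => mul_nonneg (hf i) (hg i)
    calc ∑ i ∈ s, f i * g i = Real.sqrt ((∑ i ∈ s, f i * g i) ^ 2) := (Real.sqrt_sq h0).symm
      _ ≤ Real.sqrt ((∑ i ∈ s, f i ^ 2) * ∑ i ∈ s, g i ^ 2) := Real.sqrt_le_sqrt hcs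
      _ = _ := Real.sqrt_mul (Finset.sum_nonneg fun i _ => sq_nonneg _) _
  refine h1.trans ?_
  have e1 := Real.sqrt_le_sqrt (Summable.sum_le_tsum s (fun i _ => sq_nonneg (f i)) hf2)
  have e2 := Real.sqrt_le_sqrt (Summable.sum_le_tsum s (fun i _ => sq_nonneg (g i)) hg2)
  exact mul_le_mul e1 e2 (Real.sqrt_nonneg _) (Real.sqrt_nonneg _)

lemma one_add_mul_le_sqrt_aux {x y : ℝ} (hx : 0 ≤ x) (hy : 0 ≤ y) :
    1 + x * y ≤ Real.sqrt (1 + x ^ 2) * Real.sqrt (1 + y ^ 2) := by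
  rw [← Real.sqrt_mul (by positivity)]
  have h0 : (0:ℝ) ≤ 1 + x * y := by positivity
  calc 1 + x * y = Real.sqrt ((1 + x * y) ^ 2) := (Real.sqrt_sq h0).symm
    _ ≤ _ := Real.sqrt_le_sqrt (by nlinarith [sq_nonneg (x - y)])

lemma Kfun_abs_le {T γ : ℝ} (hT : 0 < T) (hγ2 : 2 * π < T * γ) {n : ℕ} (hn : 1 ≤ n)
    {u : ℂ} (hu : γ * (n:ℝ) ≤ u.re) :
    ‖Kfun T u‖ ≤ 4 * π / (3 * T * γ ^ 2) * (((n:ℝ) ^ 2)⁻¹) := by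
  have hπ : (0:ℝ) < π := Real.pi_pos
  have hγ : 0 < γ := by nlinarith
  have hn1 : (1:ℝ) ≤ (n:ℝ) := by exact_mod_cast hn
  have habs : γ * (n:ℝ) ≤ ‖u‖ :=
    hu.trans (le_trans (le_abs_self u.re) (Complex.abs_re_le_norm u))
  have hTγn : 2 * π < T * γ * (n:ℝ) := by nlinarith
  have h1 : ‖(T:ℂ) ^ 2 * u ^ 2‖ = T ^ 2 * ‖u‖ ^ 2 := by
    rw [norm_mul, norm_pow, norm_pow, Complex.norm_real, Real.norm_eq_abs, abs_of_pos hT]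
  have h2 : ‖(π:ℂ) ^ 2‖ = π ^ 2 := by
    rw [norm_pow, Complex.norm_real, Real.norm_eq_abs, abs_of_pos hπ]
  have h3 : ‖(T:ℂ) ^ 2 * u ^ 2‖ - ‖(π:ℂ) ^ 2‖
      ≤ ‖(π:ℂ) ^ 2 - (T:ℂ) ^ 2 * u ^ 2‖ := by
    rw [norm_sub_rev]
    exact norm_sub_norm_le _ _
  have hden : 3 / 4 * (T ^ 2 * γ ^ 2 * (n:ℝ) ^ 2)
      ≤ ‖(π:ℂ) ^ 2 - (T:ℂ) ^ 2 * u ^ 2‖ := by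
    refine le_trans ?_ h3
    rw [h1, h2]
    have h4 : (2 * π) * (2 * π) < (T * γ * (n:ℝ)) * (T * γ * (n:ℝ)) := by nlinarith
    have h5 : (γ * (n:ℝ)) * (γ * (n:ℝ)) ≤ ‖u‖ * ‖u‖ :=
      mul_le_mul habs habs (by positivity) (norm_nonneg u)
    nlinarith
  have hdpos : (0:ℝ) < ‖(π:ℂ) ^ 2 - (T:ℂ) ^ 2 * u ^ 2‖ :=
    lt_of_lt_of_le (by positivity) hden
  have hK : ‖Kfun T u‖ = T * π / ‖(π:ℂ) ^ 2 - (T:ℂ) ^ 2 * u ^ 2‖ := by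
    rw [Kfun, norm_div, norm_mul, Complex.norm_real, Complex.norm_real, Real.norm_eq_abs, Real.norm_eq_abs,
      abs_of_pos hT, abs_of_pos hπ]
  rw [hK]
  calc T * π / ‖(π:ℂ) ^ 2 - (T:ℂ) ^ 2 * u ^ 2‖
      ≤ T * π / (3 / 4 * (T ^ 2 * γ ^ 2 * (n:ℝ) ^ 2)) := by
        gcongr <;> positivity
    _ = 4 * π / (3 * T * γ ^ 2) * (((n:ℝ) ^ 2)⁻¹) := by
        field_simp

set_option maxHeartbeats 1000000 in
/-- estimate of the mixed double sum. -/
theorem stmt_12 (T γ θ μ : ℝ) (τ : ℕ) (hT : 0 < T) (hγ : 2 * π / T < γ)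
    (hτ : 1 ≤ τ) (hθ : 1 / 2 < θ) (hμ : 0 < μ)
    (ω : ℕ → ℂ) (r : ℕ → ℝ) (C : ℕ → ℂ) (R : ℕ → ℝ)
    (hlow : ∀ n : ℕ, 1 ≤ n → γ * (n : ℝ) ≤ (ω n).re)
    (hr : ∀ n : ℕ, 1 ≤ n → r n ≤ -(ω n).im)
    (hR : ∀ n : ℕ, 1 ≤ n → |R n| ≤ μ * ‖C n‖ / (n : ℝ) ^ θ)
    (hsum : Summable (fun n : {n : ℕ // 1 ≤ n} =>
      ‖C (n : ℕ)‖ ^ 2 * (1 + Real.exp (-2 * (ω (n : ℕ)).im * T)))) :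
    4 * ∑' n : {n : ℕ // τ ≤ n}, ∑' m : {m : ℕ // 1 ≤ m},
        ‖C (n : ℕ)‖ * |R (m : ℕ)|
          * (1 + Real.exp ((r (m : ℕ) - (ω (n : ℕ)).im) * T))
          * ‖Kfun T (ω (n : ℕ) - Complex.I * (r (m : ℕ) : ℂ))‖
      ≤ (4 * π * Sconst μ θ / (T * γ ^ 2)) *
        ((∑' n : {n : ℕ // τ ≤ n},
            ‖C (n : ℕ)‖ ^ 2 * (1 + Real.exp (-2 * (ω (n : ℕ)).im * T)))
          + ∑' n : {n : ℕ // 1 ≤ n},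
            ‖C (n : ℕ)‖ ^ 2 * (1 + Real.exp (-2 * (ω (n : ℕ)).im * T))) := by
  have hπ : (0:ℝ) < π := Real.pi_pos
  have hTγ : 2 * π < T * γ := by
    rw [div_lt_iff₀ hT] at hγ; linarith
  have hγpos : 0 < γ := by nlinarith
  -- abbreviations
  set a : ℕ → ℝ := fun k => ‖C k‖
      * Real.sqrt (1 + Real.exp (-(ω k).im * T) ^ 2) with ha_def
  set p : ℕ → ℝ := fun k => (((k:ℝ)) ^ 2)⁻¹ with hp_def
  set q : ℕ → ℝ := fun k => ((k:ℝ)) ^ (-θ) with hq_def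
  have ha0 : ∀ k, 0 ≤ a k := fun k => by simp only [ha_def]; positivity
  have hp0 : ∀ k, 0 ≤ p k := fun k => by simp only [hp_def]; positivity
  have hq0 : ∀ k, 0 ≤ q k := fun k => by simp only [hq_def]; positivity
  have ha_sq : ∀ k, a k ^ 2
      = ‖C k‖ ^ 2 * (1 + Real.exp (-2 * (ω k).im * T)) := by
    intro k
    have h1 : Real.exp (-(ω k).im * T) ^ 2 = Real.exp (-2 * (ω k).im * T) := by
      rw [sq, ← Real.exp_add]; congr 1; ring
    simp only [ha_def]
    rw [mul_pow, Real.sq_sqrt (by positivity), h1]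
  -- summability facts
  have hsq1 : Summable (fun m : {m : ℕ // 1 ≤ m} => a (m:ℕ) ^ 2) := by
    simp only [ha_sq]; exact hsum
  have hinj : Function.Injective
      (fun n : {n : ℕ // τ ≤ n} => (⟨(n:ℕ), le_trans hτ n.2⟩ : {m : ℕ // 1 ≤ m})) :=
    by intro x y h; ext; simpa [Subtype.ext_iff] using h
  have hsqτ : Summable (fun n : {n : ℕ // τ ≤ n} => a (n:ℕ) ^ 2) := by
    have h := hsq1.comp_injective hinj
    exact h.congr fun n => rfl
  have hq2eq : ∀ m : ℕ, 1 ≤ m → q m ^ 2 = ((m:ℝ)) ^ (-(2*θ)) := by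
    intro m hm
    have hmpos : (0:ℝ) < (m:ℝ) := by exact_mod_cast hm
    simp only [hq_def]
    rw [sq, ← Real.rpow_add hmpos]
    congr 1; ring
  have hMsum : Summable (fun m : {m : ℕ // 1 ≤ m} => ((m:ℕ):ℝ) ^ (-(2*θ))) := by
    have h : Summable (fun m : ℕ => ((m:ℝ)) ^ (-(2*θ))) :=
      Real.summable_nat_rpow.mpr (by linarith)
    have h2 := h.comp_injective
      (Subtype.val_injective : Function.Injective ((↑) : {m : ℕ // 1 ≤ m} → ℕ))
    exact h2.congr fun m => rfl
  have hq2sum : Summable (fun m : {m : ℕ // 1 ≤ m} => q (m:ℕ) ^ 2) :=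
    hMsum.congr fun m => (hq2eq m m.2).symm
  have hbasel : Summable (fun k : ℕ => (((k:ℝ)) ^ 2)⁻¹) := by
    have := hasSum_zeta_two.summable
    simpa [one_div] using this
  have hpoint : ∀ n : ℕ, 1 ≤ n → p n ^ 2 ≤ (((n:ℝ)) ^ 2)⁻¹ := by
    intro n hn
    have h1 : (1:ℝ) ≤ (n:ℝ) := by exact_mod_cast hn
    have hple : p n ≤ 1 := by
      simp only [hp_def]
      have h2 : (1:ℝ) ≤ ((n:ℝ)) ^ 2 := by nlinarith
      exact inv_le_one_of_one_le₀ h2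
    have hp0' := hp0 n
    have hpe : p n = (((n:ℝ)) ^ 2)⁻¹ := by simp only [hp_def]
    nlinarith
  have hbτ : Summable (fun n : {n : ℕ // τ ≤ n} => ((((n:ℕ):ℝ)) ^ 2)⁻¹) := by
    have h := hbasel.comp_injective
      (Subtype.val_injective : Function.Injective ((↑) : {n : ℕ // τ ≤ n} → ℕ))
    exact h.congr fun n => rfl
  have hp2τ : Summable (fun n : {n : ℕ // τ ≤ n} => p (n:ℕ) ^ 2) := by
    refine Summable.of_nonneg_of_le (fun n => sq_nonneg _) (fun n => ?_) hbτ
    exact hpoint _ (le_trans hτ n.2)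
  have hP_le : (∑' n : {n : ℕ // τ ≤ n}, p (n:ℕ) ^ 2) ≤ π ^ 2 / 6 := by
    have hzeta : (∑' k : ℕ, (((k:ℝ)) ^ 2)⁻¹) = π ^ 2 / 6 := by
      have : HasSum (fun k : ℕ => (((k:ℝ)) ^ 2)⁻¹) (π ^ 2 / 6) := by
        simpa [one_div] using hasSum_zeta_two
      exact this.tsum_eq
    calc (∑' n : {n : ℕ // τ ≤ n}, p (n:ℕ) ^ 2)
        ≤ ∑' k : ℕ, (((k:ℝ)) ^ 2)⁻¹ :=
          Summable.tsum_le_tsum_of_inj (fun n : {n : ℕ // τ ≤ n} => (n:ℕ)) Subtype.val_injective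
            (fun c _ => by positivity) (fun n => hpoint _ (le_trans hτ n.2)) hp2τ hbasel
      _ = π ^ 2 / 6 := hzeta
  -- the constant
  set c : ℝ := μ * (4 * π / (3 * T * γ ^ 2)) with hc_def
  have hc0 : 0 ≤ c := by simp only [hc_def]; positivity
  -- pointwise key bound
  have hkey : ∀ (n m : ℕ), 1 ≤ n → 1 ≤ m →
      ‖C n‖ * |R m| * (1 + Real.exp ((r m - (ω n).im) * T))
        * ‖Kfun T (ω n - Complex.I * (r m : ℂ))‖
      ≤ c * (p n * a n) * (q m * a m) := by
    intro n m hn hm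
    have hmpos : (0:ℝ) < (m:ℝ) := by exact_mod_cast hm
    have hRb : |R m| ≤ μ * ‖C m‖ * q m := by
      have h1 := hR m hm
      have h2 : q m = (((m:ℝ)) ^ θ)⁻¹ := by
        simp only [hq_def]; rw [Real.rpow_neg hmpos.le]
      rw [h2, ← div_eq_mul_inv]
      exact h1
    have hre : (ω n - Complex.I * (r m : ℂ)).re = (ω n).re := by
      simp [Complex.sub_re, Complex.mul_re]
    have hKb : ‖Kfun T (ω n - Complex.I * (r m:ℂ))‖
        ≤ 4 * π / (3 * T * γ ^ 2) * ((((n:ℝ)) ^ 2)⁻¹) :=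
      Kfun_abs_le hT hTγ hn (by rw [hre]; exact hlow n hn)
    have hEb : 1 + Real.exp ((r m - (ω n).im) * T)
        ≤ Real.sqrt (1 + Real.exp (-(ω n).im * T) ^ 2)
          * Real.sqrt (1 + Real.exp (-(ω m).im * T) ^ 2) := by
      have h2 : r m * T ≤ -(ω m).im * T := mul_le_mul_of_nonneg_right (hr m hm) hT.le
      have h1 : Real.exp ((r m - (ω n).im) * T)
          ≤ Real.exp (-(ω n).im * T) * Real.exp (-(ω m).im * T) := by
        rw [← Real.exp_add]
        apply Real.exp_le_exp.mpr
        have h3 : (r m - (ω n).im) * T = r m * T - (ω n).im * T := by ring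
        rw [h3]; linarith
      calc 1 + Real.exp ((r m - (ω n).im) * T)
          ≤ 1 + Real.exp (-(ω n).im * T) * Real.exp (-(ω m).im * T) := by linarith
        _ ≤ _ := one_add_mul_le_sqrt_aux (Real.exp_pos _).le (Real.exp_pos _).le
    calc ‖C n‖ * |R m| * (1 + Real.exp ((r m - (ω n).im) * T))
          * ‖Kfun T (ω n - Complex.I * (r m : ℂ))‖
        ≤ ‖C n‖ * (μ * ‖C m‖ * q m)
          * (Real.sqrt (1 + Real.exp (-(ω n).im * T) ^ 2)
            * Real.sqrt (1 + Real.exp (-(ω m).im * T) ^ 2))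
          * (4 * π / (3 * T * γ ^ 2) * ((((n:ℝ)) ^ 2)⁻¹)) := by
          have hb0 : (0:ℝ) ≤ ‖C n‖ := norm_nonneg _
          have hb1 : (0:ℝ) ≤ |R m| := abs_nonneg _
          have hb2 : (0:ℝ) ≤ 1 + Real.exp ((r m - (ω n).im) * T) := by positivity
          have hb3 : (0:ℝ) ≤ μ * ‖C m‖ * q m := by
            have := norm_nonneg (C m); have := hq0 m; positivity
          have hb4 : (0:ℝ) ≤ Real.sqrt (1 + Real.exp (-(ω n).im * T) ^ 2)
              * Real.sqrt (1 + Real.exp (-(ω m).im * T) ^ 2) := by positivity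
          have hKnn : (0:ℝ) ≤ ‖Kfun T (ω n - Complex.I * (r m : ℂ))‖ :=
            norm_nonneg _
          exact mul_le_mul
            (mul_le_mul (mul_le_mul le_rfl hRb hb1 hb0) hEb hb2 (by positivity))
            hKb hKnn (by positivity)
      _ = c * (p n * a n) * (q m * a m) := by
          simp only [hc_def, hp_def, ha_def]
          ring
  -- summability of the factorized bounds
  have hqa_sum : Summable (fun m : {m : ℕ // 1 ≤ m} => q (m:ℕ) * a (m:ℕ)) := by
    refine Summable.of_nonneg_of_le (fun m => mul_nonneg (hq0 _) (ha0 _)) (fun m => ?_)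
      ((hq2sum.add hsq1).div_const 2)
    nlinarith [sq_nonneg (q (m:ℕ) - a (m:ℕ))]
  have hpa_sum : Summable (fun n : {n : ℕ // τ ≤ n} => p (n:ℕ) * a (n:ℕ)) := by
    refine Summable.of_nonneg_of_le (fun n => mul_nonneg (hp0 _) (ha0 _)) (fun n => ?_)
      ((hp2τ.add hsqτ).div_const 2)
    nlinarith [sq_nonneg (p (n:ℕ) - a (n:ℕ))]
  set G : ℝ := ∑' m : {m : ℕ // 1 ≤ m}, q (m:ℕ) * a (m:ℕ) with hG_def
  set F : ℝ := ∑' n : {n : ℕ // τ ≤ n}, p (n:ℕ) * a (n:ℕ) with hF_def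
  have hG0 : 0 ≤ G := tsum_nonneg fun m => mul_nonneg (hq0 _) (ha0 _)
  have hF0 : 0 ≤ F := tsum_nonneg fun n => mul_nonneg (hp0 _) (ha0 _)
  -- term of the double sum
  have hterm0 : ∀ (n m : ℕ),
      0 ≤ ‖C n‖ * |R m| * (1 + Real.exp ((r m - (ω n).im) * T))
        * ‖Kfun T (ω n - Complex.I * (r m : ℂ))‖ := by
    intro n m
    have h1 := norm_nonneg (C n)
    have h2 := abs_nonneg (R m)
    have h3 : (0:ℝ) ≤ 1 + Real.exp ((r m - (ω n).im) * T) := by positivity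
    have h4 := norm_nonneg (Kfun T (ω n - Complex.I * (r m : ℂ)))
    positivity
  have hinner : ∀ n : {n : ℕ // τ ≤ n},
      (∑' m : {m : ℕ // 1 ≤ m},
        ‖C (n:ℕ)‖ * |R (m:ℕ)|
          * (1 + Real.exp ((r (m:ℕ) - (ω (n:ℕ)).im) * T))
          * ‖Kfun T (ω (n:ℕ) - Complex.I * (r (m:ℕ) : ℂ))‖)
      ≤ (c * G) * (p (n:ℕ) * a (n:ℕ)) := by
    intro n
    have hn1 : 1 ≤ (n:ℕ) := le_trans hτ n.2
    have heq : (c * G) * (p (n:ℕ) * a (n:ℕ))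
        = ∑' m : {m : ℕ // 1 ≤ m}, (c * (p (n:ℕ) * a (n:ℕ))) * (q (m:ℕ) * a (m:ℕ)) := by
      rw [tsum_mul_left, hG_def]; ring
    rw [heq]
    refine Summable.tsum_le_tsum (fun m => ?_) ?_ (hqa_sum.mul_left _)
    · calc _ ≤ c * (p (n:ℕ) * a (n:ℕ)) * (q (m:ℕ) * a (m:ℕ)) := hkey _ _ hn1 m.2
        _ = (c * (p (n:ℕ) * a (n:ℕ))) * (q (m:ℕ) * a (m:ℕ)) := rfl
    · refine Summable.of_nonneg_of_le (fun m => hterm0 _ _) (fun m => ?_)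
        (hqa_sum.mul_left (c * (p (n:ℕ) * a (n:ℕ))))
      exact hkey _ _ hn1 m.2
  have houter : (∑' n : {n : ℕ // τ ≤ n}, ∑' m : {m : ℕ // 1 ≤ m},
        ‖C (n:ℕ)‖ * |R (m:ℕ)|
          * (1 + Real.exp ((r (m:ℕ) - (ω (n:ℕ)).im) * T))
          * ‖Kfun T (ω (n:ℕ) - Complex.I * (r (m:ℕ) : ℂ))‖)
      ≤ (c * G) * F := by
    have hsum_inner : Summable (fun n : {n : ℕ // τ ≤ n} =>
        ∑' m : {m : ℕ // 1 ≤ m},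
          ‖C (n:ℕ)‖ * |R (m:ℕ)|
            * (1 + Real.exp ((r (m:ℕ) - (ω (n:ℕ)).im) * T))
            * ‖Kfun T (ω (n:ℕ) - Complex.I * (r (m:ℕ) : ℂ))‖) := by
      refine Summable.of_nonneg_of_le
        (fun n => tsum_nonneg fun m => hterm0 _ _) (fun n => hinner n)
        (hpa_sum.mul_left (c * G))
    calc _ ≤ ∑' n : {n : ℕ // τ ≤ n}, (c * G) * (p (n:ℕ) * a (n:ℕ)) :=
          Summable.tsum_le_tsum hinner hsum_inner (hpa_sum.mul_left _)
      _ = (c * G) * F := by rw [tsum_mul_left, hF_def]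
  -- Cauchy–Schwarz bounds
  set A1 : ℝ := ∑' m : {m : ℕ // 1 ≤ m}, a (m:ℕ) ^ 2 with hA1_def
  set Aτ : ℝ := ∑' n : {n : ℕ // τ ≤ n}, a (n:ℕ) ^ 2 with hAτ_def
  have hA10 : 0 ≤ A1 := tsum_nonneg fun m => sq_nonneg _
  have hAτ0 : 0 ≤ Aτ := tsum_nonneg fun n => sq_nonneg _
  set M : ℝ := ∑' m : {m : ℕ // 1 ≤ m}, ((m:ℕ):ℝ) ^ (-(2*θ)) with hM_def
  have hMq : (∑' m : {m : ℕ // 1 ≤ m}, q (m:ℕ) ^ 2) = M := by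
    rw [hM_def]; exact tsum_congr fun m => hq2eq _ m.2
  have hGcs : G ≤ Real.sqrt M * Real.sqrt A1 := by
    have := tsum_mul_le_sqrt_mul_sqrt (fun m : {m : ℕ // 1 ≤ m} => q (m:ℕ))
      (fun m => a (m:ℕ)) (fun m => hq0 _) (fun m => ha0 _) hq2sum hsq1
    rw [hMq] at this
    exact this
  have hFcs : F ≤ Real.sqrt (π ^ 2 / 6) * Real.sqrt Aτ := by
    have h := tsum_mul_le_sqrt_mul_sqrt (fun n : {n : ℕ // τ ≤ n} => p (n:ℕ))
      (fun n => a (n:ℕ)) (fun n => hp0 _) (fun n => ha0 _) hp2τ hsqτ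
    refine h.trans ?_
    exact mul_le_mul_of_nonneg_right (Real.sqrt_le_sqrt hP_le) (Real.sqrt_nonneg _)
  set Mx : ℝ := max M (π ^ 2 / 6) with hMx_def
  have hMx0 : 0 ≤ Mx := le_trans (by positivity) (le_max_right _ _)
  have h8 : Real.sqrt M * Real.sqrt (π ^ 2 / 6) ≤ Mx := by
    calc Real.sqrt M * Real.sqrt (π ^ 2 / 6)
        ≤ Real.sqrt Mx * Real.sqrt Mx :=
          mul_le_mul (Real.sqrt_le_sqrt (le_max_left _ _))
            (Real.sqrt_le_sqrt (le_max_right _ _)) (Real.sqrt_nonneg _) (Real.sqrt_nonneg _)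
      _ = Mx := Real.mul_self_sqrt hMx0
  have h9 : Real.sqrt A1 * Real.sqrt Aτ ≤ (A1 + Aτ) / 2 := by
    nlinarith [sq_nonneg (Real.sqrt A1 - Real.sqrt Aτ), Real.sq_sqrt hA10,
      Real.sq_sqrt hAτ0, Real.sqrt_nonneg A1, Real.sqrt_nonneg Aτ]
  -- combine
  have hDS : (∑' n : {n : ℕ // τ ≤ n}, ∑' m : {m : ℕ // 1 ≤ m},
        ‖C (n:ℕ)‖ * |R (m:ℕ)|
          * (1 + Real.exp ((r (m:ℕ) - (ω (n:ℕ)).im) * T))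
          * ‖Kfun T (ω (n:ℕ) - Complex.I * (r (m:ℕ) : ℂ))‖)
      ≤ c * (Mx * ((A1 + Aτ) / 2)) := by
    refine houter.trans ?_
    have h10 : (c * G) * F
        ≤ (c * (Real.sqrt M * Real.sqrt A1)) * (Real.sqrt (π ^ 2 / 6) * Real.sqrt Aτ) :=
      mul_le_mul (mul_le_mul_of_nonneg_left hGcs hc0) hFcs hF0 (by positivity)
    refine h10.trans ?_
    have h11 : (c * (Real.sqrt M * Real.sqrt A1)) * (Real.sqrt (π ^ 2 / 6) * Real.sqrt Aτ)
        = c * ((Real.sqrt M * Real.sqrt (π ^ 2 / 6)) * (Real.sqrt A1 * Real.sqrt Aτ)) := by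
      ring
    rw [h11]
    refine mul_le_mul_of_nonneg_left ?_ hc0
    exact mul_le_mul h8 h9 (by positivity) hMx0
  -- final algebra
  have hgoalτ : (∑' n : {n : ℕ // τ ≤ n},
      ‖C (n:ℕ)‖ ^ 2 * (1 + Real.exp (-2 * (ω (n:ℕ)).im * T))) = Aτ := by
    rw [hAτ_def]; exact tsum_congr fun n => (ha_sq _).symm
  have hgoal1 : (∑' n : {n : ℕ // 1 ≤ n},
      ‖C (n:ℕ)‖ ^ 2 * (1 + Real.exp (-2 * (ω (n:ℕ)).im * T))) = A1 := by
    rw [hA1_def]; exact tsum_congr fun n => (ha_sq _).symm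
  have hS : Sconst μ θ = μ * Mx := by rw [Sconst, hMx_def, hM_def]
  rw [hgoalτ, hgoal1, hS]
  have hX : (0:ℝ) ≤ μ * π * Mx * (A1 + Aτ) / (T * γ ^ 2) := by positivity
  have e1 : 4 * (c * (Mx * ((A1 + Aτ) / 2)))
      = (8/3) * (μ * π * Mx * (A1 + Aτ) / (T * γ ^ 2)) := by
    rw [hc_def]; field_simp; ring
  have e2 : 4 * π * (μ * Mx) / (T * γ ^ 2) * (Aτ + A1)
      = 4 * (μ * π * Mx * (A1 + Aτ) / (T * γ ^ 2)) := by
    field_simp; ring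
  calc 4 * _ ≤ 4 * (c * (Mx * ((A1 + Aτ) / 2))) := by linarith [hDS]
    _ ≤ 4 * π * (μ * Mx) / (T * γ ^ 2) * (Aτ + A1) := by rw [e1, e2]; linarith [hX]
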